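/- Let φ ∈ R^n be a probability vector with positive entries, not constant, and let Φ⁺ = (1/k, ..., 1/k) ∈ R^k be the uniform distribution (k ≥ 2). If ψ ∈ R^n is strictly majorized by φ, then there exists δ > 0 such that for every probability vector χ ∈ R^k with ||χ^↓ - Φ⁺|| < δ, the majorization ψ ⊗ χ ≺ φ ⊗ Φ⁺ holds. -/

import Mathlib

open Finset

/-- `eSum v m` is the sum of the `m` largest entries of `v`
(the supremum of sums over subsets of cardinality `m`). -/
noncomputable def eSum {ι : Type} [Fintype ι] (v : ι → ℝ) (m : ℕ) : ℝ :=
  sSup {x | ∃ s : Finset ι, s.card = m ∧ x = ∑ i ∈ s, v i}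

/-- Majorization `x ≺ y`: partial sums of largest entries of `x` are dominated
by those of `y`, with equal total sums. -/
def Maj {ι κ : Type} [Fintype ι] [Fintype κ] (x : ι → ℝ) (y : κ → ℝ) : Prop :=
  (∀ m : ℕ, 1 ≤ m → m < Fintype.card ι → eSum x m ≤ eSum y m) ∧
    ∑ i, x i = ∑ j, y j

/-- Strict majorization `x ◁ y`: all inequalities strict, total sums equal. -/
def SMaj {ι κ : Type} [Fintype ι] [Fintype κ] (x : ι → ℝ) (y : κ → ℝ) : Prop :=
  (∀ m : ℕ, 1 ≤ m → m < Fintype.card ι → eSum x m < eSum y m) ∧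
    ∑ i, x i = ∑ j, y j

/-- Global uniformity: smallest entry divided by largest entry. -/
noncomputable def gu {ι : Type} [Fintype ι] (v : ι → ℝ) : ℝ :=
  sInf (Set.range v) / sSup (Set.range v)

/-- The set of ratios `v b / v a` over consecutive distinct values `v b < v a`
(no value strictly in between). -/
def ratioSet {ι : Type} [Fintype ι] (v : ι → ℝ) : Set ℝ :=
  {r | ∃ a b : ι, v b < v a ∧ (¬ ∃ c : ι, v b < v c ∧ v c < v a) ∧ r = v b / v a}

open Classical in
noncomputable def lu {ι : Type} [Fintype ι] (v : ι → ℝ) : ℝ :=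
  if (∃ a b : ι, v a ≠ v b) then sInf (ratioSet v) else 1

open Classical in
/-- Maximal local uniformity: maximum ratio of consecutive distinct values;
`1` for a constant vector. -/
noncomputable def Lu {ι : Type} [Fintype ι] (v : ι → ℝ) : ℝ :=
  if (∃ a b : ι, v a ≠ v b) then sSup (ratioSet v) else 1

/-- Tensor (Kronecker) product of two vectors. -/
def tens {ι κ : Type} (x : ι → ℝ) (y : κ → ℝ) : ι × κ → ℝ :=
  fun p => x p.1 * y p.2

/-- `k`-fold tensor power of a vector. -/
def tpow {n : ℕ} (v : Fin n → ℝ) (k : ℕ) : (Fin k → Fin n) → ℝ :=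
  fun f => ∏ i, v (f i)

/-- A probability vector: nonnegative entries summing to one. -/
def IsProb {ι : Type} [Fintype ι] (v : ι → ℝ) : Prop :=
  (∀ i, 0 ≤ v i) ∧ ∑ i, v i = 1

/-- `v` sorted in non-increasing order. -/
noncomputable def sortDesc {n : ℕ} (v : Fin n → ℝ) : Fin n → ℝ :=
  fun i => v (Tuple.sort v i.rev)

/-- Shannon entropy (base 2), with the convention `0 log 0 = 0`. -/
noncomputable def entH {ι : Type} [Fintype ι] (v : ι → ℝ) : ℝ :=
  -∑ i, v i * Real.logb 2 (v i)

/-!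
Write `u = (1/k, …, 1/k)`. For `m = k q + r` with `r < k`, the partial sums of `v ⊗ u`
interpolate those of `v`: `eSum (v ⊗ u) m = ((k - r) eSum v q + r eSum v (q + 1)) / k`; the upper
bound uses that `m ↦ eSum v m` is concave. Hence `ψ ◁ φ` gives `ψ ⊗ u ◁ φ ⊗ u`, with a
uniform gap `ε > 0` because only finitely many `m` occur. Since `eSum · m` is 1-Lipschitz for
the ℓ¹ distance and `‖ψ ⊗ χ - ψ ⊗ u‖₁ = ‖ψ‖₁ ‖χ - u‖₁ ≤ k ‖ψ‖₁ ‖χ↓ - u‖₂`, passing from `ψ ⊗ u`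
to `ψ ⊗ χ` costs less than `ε` once `δ` is small.
-/

section eSum

variable {ι : Type} [Fintype ι] (v : ι → ℝ)

lemma finite_setOf_sum_card_eq (m : ℕ) :
    {x | ∃ s : Finset ι, s.card = m ∧ x = ∑ i ∈ s, v i}.Finite :=
  (Set.finite_range fun s : Finset ι => ∑ i ∈ s, v i).subset
    (by rintro x ⟨s, -, rfl⟩; exact ⟨s, rfl⟩)

lemma sum_le_eSum (s : Finset ι) : ∑ i ∈ s, v i ≤ eSum v s.card :=
  le_csSup (finite_setOf_sum_card_eq v _).bddAbove ⟨s, rfl, rfl⟩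

lemma exists_eSum_eq {m : ℕ} (hm : m ≤ Fintype.card ι) :
    ∃ s : Finset ι, s.card = m ∧ eSum v m = ∑ i ∈ s, v i := by
  have hne : {x | ∃ s : Finset ι, s.card = m ∧ x = ∑ i ∈ s, v i}.Nonempty := by
    obtain ⟨s, -, hs⟩ := Finset.exists_subset_card_eq (s := (univ : Finset ι)) (by simpa using hm)
    exact ⟨_, s, hs, rfl⟩
  exact hne.csSup_mem (finite_setOf_sum_card_eq v m)

lemma eSum_le_of_forall {m : ℕ} (hm : m ≤ Fintype.card ι) {c : ℝ}
    (h : ∀ s : Finset ι, s.card = m → ∑ i ∈ s, v i ≤ c) : eSum v m ≤ c := by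
  obtain ⟨s, hs, he⟩ := exists_eSum_eq v hm
  exact he ▸ h s hs

lemma eSum_zero : eSum v 0 = 0 := by
  obtain ⟨s, hs, he⟩ := exists_eSum_eq v (Nat.zero_le _)
  rw [he, Finset.card_eq_zero.mp hs, Finset.sum_empty]

lemma eSum_card : eSum v (Fintype.card ι) = ∑ i, v i := by
  obtain ⟨s, hs, he⟩ := exists_eSum_eq v le_rfl
  rw [he, (Finset.card_eq_iff_eq_univ s).mp hs]

lemma eSum_le_add_sum_abs_sub (w : ι → ℝ) {m : ℕ} (hm : m ≤ Fintype.card ι) :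
    eSum v m ≤ eSum w m + ∑ i, |v i - w i| := by
  refine eSum_le_of_forall v hm fun s hs => ?_
  calc ∑ i ∈ s, v i = ∑ i ∈ s, w i + ∑ i ∈ s, (v i - w i) := by
        rw [← Finset.sum_add_distrib]; simp
    _ ≤ eSum w m + ∑ i, |v i - w i| := by
        gcongr
        · exact hs ▸ sum_le_eSum w s
        · exact (Finset.sum_le_sum fun i _ => le_abs_self _).trans
            (Finset.sum_le_sum_of_subset_of_nonneg (Finset.subset_univ s)
              fun i _ _ => abs_nonneg _)

/-- Exchanging one element between optimal sets of sizes `a` and `b` shows that the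
increments `eSum v (q + 1) - eSum v q` are non-increasing. -/
lemma eSum_add_eSum_le {a b : ℕ} (hab : a < b) (hb : b ≤ Fintype.card ι) :
    eSum v a + eSum v b ≤ eSum v (a + 1) + eSum v (b - 1) := by
  classical
  obtain ⟨s, hs, hes⟩ := exists_eSum_eq v (hab.le.trans hb)
  obtain ⟨t, ht, het⟩ := exists_eSum_eq v hb
  obtain ⟨x, hx⟩ : (t \ s).Nonempty := by
    rw [← Finset.card_pos]
    have := Finset.card_le_card_sdiff_add_card (s := t) (t := s)
    omega
  obtain ⟨hxt, hxs⟩ := Finset.mem_sdiff.mp hx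
  have hins := sum_le_eSum v (insert x s)
  have hera := sum_le_eSum v (t.erase x)
  rw [Finset.sum_insert hxs, Finset.card_insert_of_notMem hxs, hs] at hins
  rw [Finset.card_erase_of_mem hxt, ht] at hera
  have := Finset.sum_erase_add t v hxt
  linarith

lemma eSum_succ_sub_le {a b : ℕ} (hab : a ≤ b) (hb : b + 1 ≤ Fintype.card ι) :
    eSum v (b + 1) - eSum v b ≤ eSum v (a + 1) - eSum v a := by
  have := eSum_add_eSum_le v (Nat.lt_succ_of_le hab) hb
  simp only [Nat.succ_sub_one] at this
  linarith

lemma eSum_le_linear {q l : ℕ} (hq : q + 1 ≤ Fintype.card ι) (hl : l ≤ Fintype.card ι) :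
    eSum v l ≤ eSum v q + ((l : ℝ) - q) * (eSum v (q + 1) - eSum v q) := by
  rcases le_total q l with hql | hlq
  · induction l, hql using Nat.le_induction with
    | base => simp
    | succ l hql ih =>
      have := eSum_succ_sub_le v hql hl
      push_cast
      linarith [ih (by omega)]
  · induction q, hlq using Nat.le_induction with
    | base => simp
    | succ q hlq ih =>
      have hΔ := eSum_succ_sub_le v (Nat.le_succ q) hq
      have hlq' : (0 : ℝ) ≤ q + 1 - l := by
        have : (l : ℝ) ≤ q := by exact_mod_cast hlq
        linarith
      have := mul_nonneg hlq' (sub_nonneg.mpr hΔ)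
      push_cast
      nlinarith [ih (by omega)]

lemma eSum_succ_le_add {q : ℕ} (hq : q + 1 ≤ Fintype.card ι) {s : Finset ι} (hs : s.card = q)
    {a : ι} (ha : ∀ b ∉ s, v b ≤ v a) : eSum v (q + 1) ≤ eSum v q + v a := by
  classical
  obtain ⟨t, ht, het⟩ := exists_eSum_eq v hq
  obtain ⟨b, hb⟩ : (t \ s).Nonempty := by
    rw [← Finset.card_pos]
    have := Finset.card_le_card_sdiff_add_card (s := t) (t := s)
    omega
  obtain ⟨hbt, hbs⟩ := Finset.mem_sdiff.mp hb
  have herase := sum_le_eSum v (t.erase b)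
  rw [Finset.card_erase_of_mem hbt, ht, Nat.add_sub_cancel] at herase
  have := ha b hbs
  have := Finset.sum_erase_add t v hbt
  linarith

end eSum

lemma sum_mul_natCast_eq_sum_range_sum_filter {ι : Type} [Fintype ι] (f : ι → ℝ) (t : ι → ℕ)
    {K : ℕ} (ht : ∀ i, t i ≤ K) :
    ∑ i, f i * t i = ∑ c ∈ range K, ∑ i with c < t i, f i := by
  simp_rw [Finset.sum_filter]
  rw [Finset.sum_comm]
  refine Finset.sum_congr rfl fun i _ => ?_
  have hfilter : (range K).filter (· < t i) = range (t i) := by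
    ext c; simp only [Finset.mem_filter, Finset.mem_range]; specialize ht i; omega
  rw [← Finset.sum_filter, hfilter, Finset.sum_const, Finset.card_range, nsmul_eq_mul, mul_comm]

/-- Layer-cake decomposition: `∑ v i * t i` is a sum of `K` partial sums of `v`, each
bounded by the tangent line of the concave function `eSum v` at `q`. -/
lemma sum_mul_natCast_le {ι : Type} [Fintype ι] (v : ι → ℝ) (t : ι → ℕ) {K q : ℕ}
    (ht : ∀ i, t i ≤ K) (hq : q + 1 ≤ Fintype.card ι) :
    ∑ i, v i * t i ≤
      K * eSum v q + ((∑ i, (t i : ℝ)) - K * q) * (eSum v (q + 1) - eSum v q) := by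
  have hcount : ∑ i, (t i : ℝ) = ∑ c ∈ range K, ((univ.filter fun i => c < t i).card : ℝ) := by
    simpa using sum_mul_natCast_eq_sum_range_sum_filter (fun _ => (1 : ℝ)) t ht
  rw [sum_mul_natCast_eq_sum_range_sum_filter v t ht, hcount]
  calc ∑ c ∈ range K, ∑ i with c < t i, v i
      ≤ ∑ c ∈ range K, (eSum v q + (((univ.filter fun i => c < t i).card : ℝ) - q) *
          (eSum v (q + 1) - eSum v q)) :=
        Finset.sum_le_sum fun c _ =>
          (sum_le_eSum v _).trans (eSum_le_linear v hq (Finset.card_le_univ _))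
    _ = _ := by
        rw [Finset.sum_add_distrib, ← Finset.sum_mul, Finset.sum_sub_distrib]
        simp

section TensConst

variable {ι κ : Type} [Fintype ι] [Fintype κ] (v : ι → ℝ) {c : ℝ} {q r : ℕ}

lemma sum_tens (x : ι → ℝ) (y : κ → ℝ) : ∑ p, tens x y p = (∑ i, x i) * ∑ j, y j := by
  rw [Finset.sum_mul_sum, Fintype.sum_prod_type]
  rfl

lemma eSum_tens_const_le (hc : 0 ≤ c) (hq : q + 1 ≤ Fintype.card ι)
    (hr : r ≤ Fintype.card κ) :
    eSum (tens v fun _ : κ => c) (Fintype.card κ * q + r) ≤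
      c * ((Fintype.card κ - r) * eSum v q + r * eSum v (q + 1)) := by
  classical
  set K := Fintype.card κ
  refine eSum_le_of_forall _ (by simp only [Fintype.card_prod]; nlinarith) fun S hS => ?_
  set t : ι → ℕ := fun i => (S.filter fun p => p.1 = i).card
  have ht : ∀ i, t i ≤ K := fun i =>
    (Finset.card_le_card fun p hp => by
      simp only [Finset.mem_filter] at hp
      simp [← hp.2]).trans_eq
      (by simp [K] : (({i} : Finset ι) ×ˢ (univ : Finset κ)).card = K)
  have hsum_t : ∑ i, (t i : ℝ) = K * q + r := by
    exact_mod_cast (Finset.card_eq_sum_card_fiberwise fun p _ => Finset.mem_univ p.1).symm.trans hS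
  have hfiber : ∑ p ∈ S, tens v (fun _ : κ => c) p = c * ∑ i, v i * t i := by
    rw [← Finset.sum_fiberwise_of_maps_to (g := Prod.fst) fun p _ => Finset.mem_univ p.1,
      Finset.mul_sum]
    refine Finset.sum_congr rfl fun i _ => ?_
    rw [Finset.sum_congr rfl fun p hp => by rw [tens, (Finset.mem_filter.mp hp).2]]
    simp only [Finset.sum_const, nsmul_eq_mul, t]
    ring
  have := sum_mul_natCast_le v t ht hq
  rw [hsum_t] at this
  rw [hfiber]
  refine mul_le_mul_of_nonneg_left (this.trans_eq ?_) hc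
  ring

lemma le_eSum_tens_const (hc : 0 ≤ c) (hq : q + 1 ≤ Fintype.card ι)
    (hr : r ≤ Fintype.card κ) :
    c * ((Fintype.card κ - r) * eSum v q + r * eSum v (q + 1)) ≤
      eSum (tens v fun _ : κ => c) (Fintype.card κ * q + r) := by
  classical
  set K := Fintype.card κ
  obtain ⟨s, hs, hes⟩ := exists_eSum_eq v (m := q) (by omega)
  obtain ⟨a, ha, hamax⟩ := Finset.exists_max_image sᶜ v
    (by rw [← Finset.card_pos, Finset.card_compl, hs]; omega)
  have has : a ∉ s := Finset.mem_compl.mp ha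
  have hnext := eSum_succ_le_add v hq hs fun b hb => hamax b (Finset.mem_compl.mpr hb)
  obtain ⟨w, -, hw⟩ := Finset.exists_subset_card_eq (s := (univ : Finset κ)) (n := r)
    (by simpa using hr)
  have hdisj : Disjoint (s ×ˢ (univ : Finset κ)) ({a} ×ˢ w) :=
    Finset.disjoint_product.mpr (Or.inl (Finset.disjoint_singleton_right.mpr has))
  have hle := sum_le_eSum (tens v fun _ : κ => c) (s ×ˢ univ ∪ {a} ×ˢ w)
  rw [Finset.card_union_of_disjoint hdisj, Finset.sum_union hdisj] at hle
  simp only [Finset.card_product, Finset.card_singleton, Finset.card_univ, hs, hw,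
    Finset.sum_product, Finset.sum_singleton, tens, Finset.sum_const, nsmul_eq_mul] at hle
  have htop : ∑ i ∈ s, (K : ℝ) * (v i * c) = K * c * eSum v q := by
    rw [hes, Finset.mul_sum]
    exact Finset.sum_congr rfl fun _ _ => by ring
  rw [mul_comm q, one_mul, htop] at hle
  refine le_trans ?_ hle
  have := mul_le_mul_of_nonneg_left hnext (mul_nonneg (Nat.cast_nonneg r) hc)
  nlinarith

lemma eSum_tens_const (hc : 0 ≤ c) (hq : q + 1 ≤ Fintype.card ι) (hr : r ≤ Fintype.card κ) :
    eSum (tens v fun _ : κ => c) (Fintype.card κ * q + r) =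
      c * ((Fintype.card κ - r) * eSum v q + r * eSum v (q + 1)) :=
  (eSum_tens_const_le v hc hq hr).antisymm (le_eSum_tens_const v hc hq hr)

end TensConst

lemma sum_abs_tens_sub {ι κ : Type} [Fintype ι] [Fintype κ] (x : ι → ℝ) (y z : κ → ℝ) :
    ∑ p, |tens x y p - tens x z p| = (∑ i, |x i|) * ∑ j, |y j - z j| := by
  rw [← sum_tens]
  exact Finset.sum_congr rfl fun p _ => by simp only [tens, ← mul_sub, abs_mul]

lemma sum_abs_le_card_mul_sqrt_sum_sq {ι : Type} [Fintype ι] (x : ι → ℝ) :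
    ∑ i, |x i| ≤ Fintype.card ι * √(∑ i, x i ^ 2) := by
  calc ∑ i, |x i| ≤ ∑ _i : ι, √(∑ i, x i ^ 2) := Finset.sum_le_sum fun i _ =>
        Real.abs_le_sqrt (Finset.single_le_sum (f := fun i => x i ^ 2)
          (fun _ _ => sq_nonneg _) (Finset.mem_univ i))
    _ = _ := by simp

lemma sum_abs_sub_le_mul_sqrt_sortDesc {k : ℕ} (χ : Fin k → ℝ) (a : ℝ) :
    ∑ j, |χ j - a| ≤ k * √(∑ i, (sortDesc χ i - a) ^ 2) := by
  have hperm : ∑ i, |sortDesc χ i - a| = ∑ j, |χ j - a| :=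
    Equiv.sum_comp (Fin.revPerm.trans (Tuple.sort χ)) fun j => |χ j - a|
  have := sum_abs_le_card_mul_sqrt_sum_sq fun i => sortDesc χ i - a
  rwa [Fintype.card_fin, hperm] at this

namespace SMaj

variable {ι : Type} [Fintype ι] {x y : ι → ℝ}

lemma eSum_le (h : SMaj x y) {m : ℕ} (hm : m ≤ Fintype.card ι) : eSum x m ≤ eSum y m := by
  rcases Nat.eq_zero_or_pos m with rfl | hm0
  · rw [eSum_zero, eSum_zero]
  rcases hm.lt_or_eq with hlt | rfl
  · exact (h.1 m hm0 hlt).le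
  · rw [eSum_card, eSum_card, h.2]

lemma exists_pos_add_le (h : SMaj x y) :
    ∃ ε > 0, ∀ m, 1 ≤ m → m < Fintype.card ι → eSum x m + ε ≤ eSum y m := by
  have hev : ∀ᶠ ε in nhdsWithin (0 : ℝ) (Set.Ioi 0),
      ∀ m ∈ Finset.Ico 1 (Fintype.card ι), eSum x m + ε ≤ eSum y m := by
    refine (Filter.eventually_all_finset _).2 fun m hm => ?_
    obtain ⟨hm1, hm⟩ := Finset.mem_Ico.mp hm
    filter_upwards [nhdsWithin_le_nhds (eventually_le_nhds (sub_pos.mpr (h.1 m hm1 hm)))]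
      with ε hε
    linarith
  obtain ⟨ε, hε, hpos⟩ := (hev.and self_mem_nhdsWithin).exists
  exact ⟨ε, hpos, fun m hm1 hm => hε m (Finset.mem_Ico.mpr ⟨hm1, hm⟩)⟩

lemma tens_const {κ : Type} [Fintype κ] (h : SMaj x y) (hι : 1 < Fintype.card ι) {c : ℝ}
    (hc : 0 < c) : SMaj (tens x fun _ : κ => c) (tens y fun _ : κ => c) := by
  refine ⟨fun m hm1 hm => ?_, by rw [sum_tens, sum_tens, h.2]⟩
  set K := Fintype.card κ
  rw [Fintype.card_prod] at hm
  have hK : 0 < K := Nat.pos_of_ne_zero fun h0 => by simp [K, h0] at hm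
  obtain ⟨q, r, rfl, hrK⟩ : ∃ q r, K * q + r = m ∧ r < K :=
    ⟨m / K, m % K, Nat.div_add_mod m K, Nat.mod_lt m hK⟩
  have hq : q + 1 ≤ Fintype.card ι := Nat.lt_of_mul_lt_mul_left (a := K) (by nlinarith)
  rw [eSum_tens_const x hc.le hq hrK.le, eSum_tens_const y hc.le hq hrK.le]
  refine mul_lt_mul_of_pos_left ?_ hc
  have hKr : (r : ℝ) < K := by exact_mod_cast hrK
  have hnext := h.eSum_le hq
  rcases Nat.eq_zero_or_pos q with rfl | hq0
  · have hr : (1 : ℝ) ≤ r := by exact_mod_cast (by omega : 1 ≤ r)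
    have := h.1 1 le_rfl hι
    rw [eSum_zero, eSum_zero]
    nlinarith
  · have := h.1 q hq0 (by omega)
    nlinarith

end SMaj

theorem exists_delta_concentration_general {n k : ℕ} (hk : 2 ≤ k)
    (φ : Fin n → ℝ) (hφnc : ∃ a b : Fin n, φ a ≠ φ b)
    (ψ : Fin n → ℝ) (hsm : SMaj ψ φ) :
    ∃ δ > 0, ∀ χ : Fin k → ℝ, IsProb χ →
      Real.sqrt (∑ i, (sortDesc χ i - 1 / (k : ℝ)) ^ 2) < δ →
      Maj (tens ψ χ) (tens φ (fun _ : Fin k => 1 / (k : ℝ))) := by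
  obtain ⟨a, b, hab⟩ := hφnc
  have hn : 1 < Fintype.card (Fin n) :=
    Fintype.one_lt_card_iff.mpr ⟨a, b, fun h => hab (congrArg φ h)⟩
  have hk0 : (0 : ℝ) < k := by exact_mod_cast (by omega : 0 < k)
  set u : Fin k → ℝ := fun _ => 1 / (k : ℝ)
  obtain ⟨ε, hε, hgap⟩ := (hsm.tens_const (κ := Fin k) hn (one_div_pos.mpr hk0)).exists_pos_add_le
  set M := ∑ i, |ψ i|
  refine ⟨ε / (k * (M + 1)), by positivity, fun χ hχ hclose => ⟨fun m hm1 hm => ?_, ?_⟩⟩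
  · have hdist : M * ∑ j, |χ j - u j| ≤ ε := by
      have hl1 := sum_abs_sub_le_mul_sqrt_sortDesc χ (1 / (k : ℝ))
      have hM : 0 < M + 1 := by positivity
      calc M * ∑ j, |χ j - u j| ≤ (M + 1) * (k * (ε / (k * (M + 1)))) :=
            mul_le_mul (by linarith) (hl1.trans (mul_le_mul_of_nonneg_left hclose.le hk0.le))
              (by positivity) hM.le
        _ = ε := by field_simp
    calc eSum (tens ψ χ) m ≤ eSum (tens ψ u) m + ∑ p, |tens ψ χ p - tens ψ u p| :=
          eSum_le_add_sum_abs_sub _ _ hm.le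
      _ ≤ eSum (tens ψ u) m + ε := by rw [sum_abs_tens_sub]; gcongr
      _ ≤ _ := hgap m hm1 hm
  · rw [sum_tens, sum_tens, hχ.2, hsm.2]
    simp [u, hk0.ne']

/-- states close enough to the maximally entangled (uniform)
state can be concentrated into it alongside any strict transformation. -/
theorem exists_delta_concentration {n k : ℕ} (hk : 2 ≤ k)
    (φ : Fin n → ℝ) (hφprob : IsProb φ) (hφpos : ∀ i, 0 < φ i)
    (hφnc : ∃ a b : Fin n, φ a ≠ φ b)
    (ψ : Fin n → ℝ) (hsm : SMaj ψ φ) :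
    ∃ δ > 0, ∀ χ : Fin k → ℝ, IsProb χ →
      Real.sqrt (∑ i, (sortDesc χ i - 1 / (k : ℝ)) ^ 2) < δ →
      Maj (tens ψ χ) (tens φ (fun _ : Fin k => 1 / (k : ℝ))) :=
  exists_delta_concentration_general hk φ hφnc ψ hsm
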